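/- arXiv:1411.7341 — 2 statements merged into one kernel-verified Lean document; each statement's English description precedes it below -/
import Mathlib

section
/- Let F be a field, let n, d, ℓ be positive integers, and let β_1,…,β_d be distinct nonzero elements of F. Let A ∈ F[x_1,…,x_n] be a nonzero polynomial of individual degree at most d that has a nonzero coefficient on some monomial x^a with supp(a) < ℓ. Then there exists a point h ∈ {0,β_1,…,β_d}^n with supp(h) < ℓ such that A(h) ≠ 0. -/
open MvPolynomial Matrix

noncomputable section

variable {F : Type*} [Field F]

/-- `p` only involves the variable `i` (it is a univariate polynomial in `x_i`). -/
def UnivariateIn {n : ℕ} (i : Fin n) (p : MvPolynomial (Fin n) F) : Prop :=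
  ∀ m ∈ p.support, ∀ j : Fin n, j ≠ i → m j = 0

/-- The ordered product `D 0 * D 1 * ⋯ * D (n-1)` of the layer matrices of a branching program. -/
def layerProd {n w : ℕ} (D : Fin n → Matrix (Fin w) (Fin w) (MvPolynomial (Fin n) F)) :
    Matrix (Fin w) (Fin w) (MvPolynomial (Fin n) F) :=
  ((List.finRange n).map D).prod

/-- The ordered product of the first `k` layer matrices. -/
def prefixProd {n w : ℕ} (k : ℕ)
    (D : Fin n → Matrix (Fin w) (Fin w) (MvPolynomial (Fin n) F)) :
    Matrix (Fin w) (Fin w) (MvPolynomial (Fin n) F) :=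
  (((List.finRange n).take k).map D).prod

/-- `A` is computed by a read-once oblivious ABP of width `w` in variable order
`(x_{π 0}, …, x_{π (n-1)})`: `A = D₁ ⋯ Dₙ` where the entries of the `i`-th layer are
univariate polynomials in `x_{π i}`; the `1 × w` first layer and the `w × 1` last layer are
encoded by the constant selection vectors `u` and `v`. -/
def IsROABP {n : ℕ} (w : ℕ) (π : Equiv.Perm (Fin n)) (A : MvPolynomial (Fin n) F) : Prop :=
  ∃ (u : Matrix (Fin 1) (Fin w) F) (D : Fin n → Matrix (Fin w) (Fin w) (MvPolynomial (Fin n) F))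
    (v : Matrix (Fin w) (Fin 1) F),
    (∀ i r c, UnivariateIn (π i) (D i r c)) ∧
      A = ((u.map (MvPolynomial.C) : Matrix (Fin 1) (Fin w) (MvPolynomial (Fin n) F)) * layerProd D *
          (v.map (MvPolynomial.C) : Matrix (Fin w) (Fin 1) (MvPolynomial (Fin n) F)) :
        Matrix (Fin 1) (Fin 1) (MvPolynomial (Fin n) F)) 0 0

/-- The vector polynomial `P ∈ F[x]^{1×w}` is computed by an ROABP of width `w`
in variable order `π`. -/
def IsVecROABP {n : ℕ} (w : ℕ) (π : Equiv.Perm (Fin n))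
    (P : Fin w → MvPolynomial (Fin n) F) : Prop :=
  ∃ (u : Matrix (Fin 1) (Fin w) F) (D : Fin n → Matrix (Fin w) (Fin w) (MvPolynomial (Fin n) F)),
    (∀ i r c, UnivariateIn (π i) (D i r c)) ∧
      ∀ j, P j = (u.map (MvPolynomial.C) * layerProd D :
        Matrix (Fin 1) (Fin w) (MvPolynomial (Fin n) F)) 0 j

/-- The matrix polynomial `A ∈ F^{w×w}[x]` is computed by an ROABP of width `w`
in variable order `π`. -/
def IsMatROABP {n : ℕ} (w : ℕ) (π : Equiv.Perm (Fin n))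
    (A : Matrix (Fin w) (Fin w) (MvPolynomial (Fin n) F)) : Prop :=
  ∃ D : Fin n → Matrix (Fin w) (Fin w) (MvPolynomial (Fin n) F),
    (∀ i r c, UnivariateIn (π i) (D i r c)) ∧ A = layerProd D

/-- `A` has individual degree at most `d` in every variable. -/
def IndivDegLE {n : ℕ} (d : ℕ) (A : MvPolynomial (Fin n) F) : Prop :=
  ∀ m ∈ A.support, ∀ i, m i ≤ d

/-- The set of the first `k` variables `y_k = (x_0, …, x_{k-1})`. -/
def prefixFinset (n k : ℕ) : Finset (Fin n) := Finset.univ.filter fun i => (i : ℕ) < k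

/-- The coefficient polynomial `A_{(y,a)} ∈ F[z]`: the coefficient of the monomial `y^a`
when `A` is written as a polynomial in the variables `y` (those in `S`) with coefficients
in the remaining variables `z`. -/
def coeffWrt {n : ℕ} (S : Finset (Fin n)) (a : Fin n → ℕ) (A : MvPolynomial (Fin n) F) :
    MvPolynomial (Fin n) F :=
  ∑ m ∈ A.support.filter (fun m => ∀ i ∈ S, m i = a i),
    MvPolynomial.monomial (m.filter fun i => i ∉ S) (A.coeff m)

/-- The exponent vector supported on `S` with values given by `a`. -/
def expOn {n : ℕ} (S : Finset (Fin n)) (a : Fin n → ℕ) : Fin n →₀ ℕ :=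
  Finsupp.equivFunOnFinite.symm fun i => if i ∈ S then a i else 0

/-- A family of coefficients (of a polynomial over the `K`-vector space `V`) is
`ℓ`-concentrated over `K` if every coefficient lies in the `K`-span of the coefficients
of monomials of support `< ℓ`. -/
def Concentrated (K : Type*) [Field K] {V : Type*} [AddCommGroup V] [Module K V] {n : ℕ}
    (ℓ : ℕ) (cf : (Fin n →₀ ℕ) → V) : Prop :=
  ∀ a : Fin n →₀ ℕ, cf a ∈ Submodule.span K (cf '' {b | b.support.card < ℓ})

/-- The polynomial `A(x + f(t))`, with coefficients viewed in the rational function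
field `F(t)`. -/
def shiftBy {n : ℕ} (f : Fin n → Polynomial F) (A : MvPolynomial (Fin n) F) :
    MvPolynomial (Fin n) (RatFunc F) :=
  MvPolynomial.aeval
    (fun i => MvPolynomial.X i +
      MvPolynomial.C (algebraMap (Polynomial F) (RatFunc F) (f i))) A

/-- The polynomial `A(x + g(y,t))` for a bivariate shift `g ∈ F[y,t]^n`
(encoded with `y` the outer and `t` the inner variable), with coefficients viewed in the
rational function field `F(y,t)`. -/
def shiftBy₂ {n : ℕ} (g : Fin n → Polynomial (Polynomial F)) (A : MvPolynomial (Fin n) F) :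
    MvPolynomial (Fin n) (RatFunc (RatFunc F)) :=
  MvPolynomial.aeval
    (fun i => MvPolynomial.X i +
      MvPolynomial.C (algebraMap (Polynomial (RatFunc F)) (RatFunc (RatFunc F))
        ((g i).map (algebraMap (Polynomial F) (RatFunc F))))) A

end

/-! Let `x^a` be a monomial of support `< ℓ` on which `A` has a nonzero coefficient, and `S` the
support of `a`. Keeping only the terms of `A` whose monomials involve just the variables in `S`
gives a nonzero polynomial `B` of individual degree `≤ d` that does not depend on the variables
outside `S`. By the Combinatorial Nullstellensatz, `B` does not vanish on the grid whose `i`-th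
factor is `{0, β₁, …, β_d}` for `i ∈ S` and `{0}` otherwise; and on points supported in `S`,
`B` and `A` take the same value. -/

namespace MvPolynomial

variable {σ R : Type*} [CommSemiring R]

open Classical in
noncomputable def supportedPart (s : Set σ) (p : MvPolynomial σ R) : MvPolynomial σ R :=
  AddMonoidAlgebra.ofCoeff ((AddMonoidAlgebra.coeff p).filter fun m => ↑m.support ⊆ s)

variable {s : Set σ} {p : MvPolynomial σ R}

open Classical in
theorem coeff_supportedPart (m : σ →₀ ℕ) :
    coeff m (supportedPart s p) = if ↑m.support ⊆ s then coeff m p else 0 :=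
  rfl

open Classical in
theorem support_supportedPart :
    (supportedPart s p).support = {m ∈ p.support | ↑m.support ⊆ s} :=
  rfl

theorem support_supportedPart_subset : (supportedPart s p).support ⊆ p.support := by
  classical
  exact support_supportedPart (p := p) ▸ Finset.filter_subset _ _

theorem degreeOf_supportedPart_eq_zero {i : σ} (hi : i ∉ s) :
    (supportedPart s p).degreeOf i = 0 := by
  classical
  refine Nat.lt_one_iff.mp ((degreeOf_lt_iff one_pos).mpr fun m hm => ?_)
  rw [support_supportedPart, Finset.mem_filter] at hm
  exact Nat.lt_one_iff.mpr (Finsupp.notMem_support_iff.mp fun him => hi (hm.2 him))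

theorem eval_supportedPart {x : σ → R} (hx : ∀ i ∉ s, x i = 0) :
    eval x (supportedPart s p) = eval x p := by
  classical
  rw [eval_eq, eval_eq, support_supportedPart]
  refine (Finset.sum_congr rfl fun m hm => ?_).trans (Finset.sum_filter_of_ne fun m _ hm => ?_)
  · rw [coeff_supportedPart, if_pos (Finset.mem_filter.mp hm).2]
  · intro i hi
    by_contra his
    refine hm (mul_eq_zero_of_right _ (Finset.prod_eq_zero hi ?_))
    rw [hx i his, zero_pow (Finsupp.mem_support_iff.mp hi)]

end MvPolynomial

open Finset

theorem Finset.card_insert_zero_image_univ {M : Type*} [Zero M] [DecidableEq M] {d : ℕ}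
    {β : Fin d → M} (hβ : Function.Injective β) (hβ₀ : ∀ j, β j ≠ 0) :
    #(insert 0 (univ.image β)) = d + 1 := by
  rw [card_insert_of_notMem (by simpa using hβ₀), card_image_of_injective _ hβ,
    card_univ, Fintype.card_fin]

theorem exists_low_support_nonzero_point_of_concentrated_general
    {F : Type*} [Field F] {n d ℓ : ℕ}
    (β : Fin d → F) (hβinj : Function.Injective β) (hβne : ∀ j, β j ≠ 0)
    (A : MvPolynomial (Fin n) F) (hdeg : IndivDegLE d A)
    (hconc : ∃ a : Fin n →₀ ℕ, A.coeff a ≠ 0 ∧ a.support.card < ℓ) :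
    ∃ h : Fin n → F,
      (∀ i, h i = 0 ∨ ∃ j, h i = β j) ∧
      (Function.support h).ncard < ℓ ∧
      MvPolynomial.eval h A ≠ 0 := by
  classical
  obtain ⟨a, ha, ha_card⟩ := hconc
  set B := supportedPart (↑a.support) A
  let grid : Fin n → Finset F := fun i =>
    if i ∈ a.support then insert 0 (univ.image β) else {0}
  have hB : B ≠ 0 := fun hB => ha (by simpa [B, coeff_supportedPart] using congr_arg (coeff a) hB)
  have hB_deg : ∀ i, B.degreeOf i < #(grid i) := by
    intro i
    by_cases hi : i ∈ a.support
    · rw [show grid i = _ from if_pos hi, card_insert_zero_image_univ hβinj hβne,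
        Nat.lt_succ_iff]
      exact degreeOf_le_iff.mpr fun m hm => hdeg m (support_supportedPart_subset hm) i
    · rw [show grid i = _ from if_neg hi, card_singleton,
        degreeOf_supportedPart_eq_zero (mt mem_coe.mp hi)]
      exact one_pos
  obtain ⟨x, hx_grid, hx⟩ : ∃ x, (∀ i, x i ∈ grid i) ∧ eval x B ≠ 0 := by
    by_contra! h
    exact hB (eq_zero_of_eval_zero_at_prod_finset B grid hB_deg h)
  have hx_supp : ∀ i ∉ a.support, x i = 0 := fun i hi => by
    simpa only [grid, if_neg hi, mem_singleton] using hx_grid i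
  refine ⟨x, fun i => ?_, ?_, by rwa [← eval_supportedPart hx_supp]⟩
  · by_cases hi : i ∈ a.support
    · simpa only [grid, if_pos hi, mem_insert, mem_image, mem_univ, true_and, eq_comm]
        using hx_grid i
    · exact .inl (hx_supp i hi)
  · calc (Function.support x).ncard ≤ (↑a.support : Set (Fin n)).ncard :=
          Set.ncard_le_ncard (fun i hi => by_contra fun h => hi (hx_supp i h)) (Set.toFinite _)
      _ < ℓ := by rwa [Set.ncard_coe_finset]

/-- Lemma 4.3 of the paper, hitting set for concentrated polynomials:
if a nonzero polynomial `A` of individual degree `≤ d` has a nonzero coefficient on a monomial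
of support `< ℓ`, then `A` has a nonzero point in the grid `{0, β₁, …, β_d}^n` of support `< ℓ`,
where the `βⱼ`'s are distinct nonzero field elements. -/
theorem exists_low_support_nonzero_point_of_concentrated
    {F : Type*} [Field F] {n d ℓ : ℕ} (hn : 0 < n) (hd : 0 < d) (hl : 0 < ℓ)
    (β : Fin d → F) (hβinj : Function.Injective β) (hβne : ∀ j, β j ≠ 0)
    (A : MvPolynomial (Fin n) F) (hA : A ≠ 0) (hdeg : IndivDegLE d A)
    (hconc : ∃ a : Fin n →₀ ℕ, A.coeff a ≠ 0 ∧ a.support.card < ℓ) :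
    ∃ h : Fin n → F,
      (∀ i, h i = 0 ∨ ∃ j, h i = β j) ∧
      (Function.support h).ncard < ℓ ∧
      MvPolynomial.eval h A ≠ 0 :=
  exists_low_support_nonzero_point_of_concentrated_general β hβinj hβne A hdeg hconc
end

section
/- Let F be a field, ℓ ≥ 1 an integer, and V ∈ F[x_1,…,x_n] a nonzero polynomial with at most 2^ℓ − 1 monomials having nonzero coefficients (sparsity ≤ 2^ℓ − 1). Then the shifted polynomial V(x_1+1, x_2+1, …, x_n+1) has a nonzero coefficient on some monomial x^a with supp(a) < ℓ. -/
open MvPolynomial Matrix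

/-!
Write `V = ∑_d x₀^d V_d` with `V_d` in the remaining variables `x'`. In `V(x + 1)`, the part
free of `x₀` is `W(x' + 1)` with `W = ∑_d V_d = V(1, x')`, and the part of top degree
`D = deg_{x₀} V` is `x₀^D V_D(x' + 1)`. If `W ≠ 0`, induct on `W`, which has no more monomials
than `V`. If `W = 0`, then `V_D = -∑_{d<D} V_d`, so `V_D` carries at most half the monomials of `V`;
induct on `V_D` and multiply the monomial found by `x₀^D`. Either way some `a` with
`2 ^ supp(a) ≤ sparsity(V)` has a nonzero coefficient in `V(x + 1)`.
-/

namespace Finsupp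

variable {M : Type*} [Zero M] {n : ℕ}

theorem support_cons_zero (s : Fin n →₀ M) :
    (cons 0 s).support = s.support.map (Fin.succEmb n) := by
  ext i
  cases i using Fin.cases <;> simp

theorem support_cons_of_ne_zero {y : M} (hy : y ≠ 0) (s : Fin n →₀ M) :
    (cons y s).support = insert 0 (s.support.map (Fin.succEmb n)) := by
  ext i
  cases i using Fin.cases <;> simp [hy]

end Finsupp

namespace Polynomial

open scoped Finset

section CommSemiring

variable {S : Type*} [CommSemiring S] (P : S[X])

theorem coeff_comp_X_add_one_zero : (P.comp (X + 1)).coeff 0 = P.eval 1 := by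
  simp [coeff_zero_eq_eval_zero]

theorem coeff_comp_X_add_one_natDegree [Nontrivial S] :
    (P.comp (X + 1)).coeff P.natDegree = P.leadingCoeff := by
  have h := P.coeff_comp_degree_mul_degree (q := X + C 1)
    (by rw [natDegree_X_add_C]; exact one_ne_zero)
  rwa [natDegree_X_add_C, leadingCoeff_X_add_C, one_pow, mul_one, mul_one, C_1] at h

theorem card_support_eval_one_le {σ : Type*} (Q : (MvPolynomial σ S)[X]) :
    #(Q.eval 1).support ≤ ∑ d ∈ Q.support, #(Q.coeff d).support := by
  classical
  rw [eval_eq_sum, sum_def]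
  simp only [one_pow, mul_one]
  exact (Finset.card_le_card MvPolynomial.support_sum).trans Finset.card_biUnion_le

end CommSemiring

theorem two_mul_card_support_leadingCoeff_le {σ R : Type*} [CommRing R]
    (P : (MvPolynomial σ R)[X]) (h : P.eval 1 = 0) :
    2 * #P.leadingCoeff.support ≤ ∑ d ∈ P.support, #(P.coeff d).support := by
  classical
  rcases eq_or_ne P 0 with rfl | hP
  · simp
  have hD : P.natDegree ∈ P.support := natDegree_mem_support_of_nonzero hP
  have hlc : P.leadingCoeff = -∑ d ∈ P.support.erase P.natDegree, P.coeff d := by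
    rw [eval_eq_sum, sum_def, ← Finset.add_sum_erase _ _ hD] at h
    simp only [one_pow, mul_one] at h
    exact eq_neg_of_add_eq_zero_left h
  have hlow : #P.leadingCoeff.support ≤
      ∑ d ∈ P.support.erase P.natDegree, #(P.coeff d).support := by
    rw [hlc, MvPolynomial.support_neg]
    exact (Finset.card_le_card MvPolynomial.support_sum).trans Finset.card_biUnion_le
  rw [← Finset.add_sum_erase _ _ hD, coeff_natDegree]
  omega

end Polynomial

namespace MvPolynomial

open Finset

section CommSemiring

variable {σ R : Type*} [CommSemiring R] {n : ℕ}

variable (σ R) in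
noncomputable def shiftOne : MvPolynomial σ R →ₐ[R] MvPolynomial σ R := aeval fun i => X i + 1

theorem finSuccEquiv_shiftOne (V : MvPolynomial (Fin (n + 1)) R) :
    finSuccEquiv R n (shiftOne _ _ V) =
      ((finSuccEquiv R n V).comp (Polynomial.X + 1)).map (shiftOne (Fin n) R) := by
  induction V using MvPolynomial.induction_on with
  | C a => simp [shiftOne, finSuccEquiv_apply]
  | add p q hp hq => simp only [map_add, hp, hq, Polynomial.add_comp, Polynomial.map_add]
  | mul_X p i hp =>
    have hX : finSuccEquiv R n (shiftOne _ _ (X i)) =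
        ((finSuccEquiv R n (X i)).comp (Polynomial.X + 1)).map (shiftOne (Fin n) R) := by
      cases i using Fin.cases <;> simp [shiftOne, finSuccEquiv_X_zero, finSuccEquiv_X_succ]
    simp only [map_mul, hp, hX, Polynomial.mul_comp, Polynomial.map_mul]

theorem coeff_cons_shiftOne (V : MvPolynomial (Fin (n + 1)) R) (d : ℕ) (a : Fin n →₀ ℕ) :
    coeff (a.cons d) (shiftOne _ _ V) =
      coeff a (shiftOne _ _ (((finSuccEquiv R n V).comp (Polynomial.X + 1)).coeff d)) := by
  rw [← finSuccEquiv_coeff_coeff, finSuccEquiv_shiftOne, Polynomial.coeff_map]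
  rfl

theorem card_support_eq_sum_card_support_coeff_finSuccEquiv (V : MvPolynomial (Fin (n + 1)) R) :
    #V.support =
      ∑ d ∈ (finSuccEquiv R n V).support, #((finSuccEquiv R n V).coeff d).support := by
  classical
  rw [support_finSuccEquiv, card_eq_sum_card_image (fun m : Fin (n + 1) →₀ ℕ => m 0)]
  refine sum_congr rfl fun d _ => ?_
  rw [← image_support_finSuccEquiv, card_image_of_injective _ (Finsupp.cons_right_injective d)]

end CommSemiring

theorem exists_two_pow_card_support_le_and_coeff_shiftOne_ne_zero {R : Type*} [CommRing R] :
    ∀ {n : ℕ} (V : MvPolynomial (Fin n) R), V ≠ 0 →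
      ∃ a : Fin n →₀ ℕ, 2 ^ #a.support ≤ #V.support ∧ coeff a (shiftOne _ _ V) ≠ 0
  | 0, V, hV => by
    refine ⟨0, ?_, ?_⟩
    · simpa using card_pos.mpr (support_nonempty.mpr hV)
    · rw [eq_C_of_isEmpty V] at hV ⊢
      simpa [shiftOne] using hV
  | n + 1, V, hV => by
    obtain ⟨m, hm⟩ := ne_zero_iff.mp hV
    have : Nontrivial R := nontrivial_of_ne _ _ hm
    have hsparse := card_support_eq_sum_card_support_coeff_finSuccEquiv V
    set P := finSuccEquiv R n V
    have hP : P ≠ 0 := by simpa [P] using hV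
    by_cases hW : P.eval 1 = 0
    · have hD : P.natDegree ≠ 0 := by
        intro hD
        rw [Polynomial.eq_C_of_natDegree_eq_zero hD, Polynomial.eval_C] at hW
        exact hP (Polynomial.leadingCoeff_eq_zero.mp (by rwa [Polynomial.leadingCoeff, hD]))
      obtain ⟨a, ha, hne⟩ := exists_two_pow_card_support_le_and_coeff_shiftOne_ne_zero
        P.leadingCoeff (Polynomial.leadingCoeff_ne_zero.mpr hP)
      refine ⟨a.cons P.natDegree, ?_, ?_⟩
      · rw [Finsupp.support_cons_of_ne_zero hD, card_insert_of_notMem (by simp), card_map,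
          pow_succ]
        have := P.two_mul_card_support_leadingCoeff_le hW
        omega
      · rwa [coeff_cons_shiftOne, Polynomial.coeff_comp_X_add_one_natDegree]
    · obtain ⟨a, ha, hne⟩ := exists_two_pow_card_support_le_and_coeff_shiftOne_ne_zero _ hW
      refine ⟨a.cons 0, ?_, ?_⟩
      · rw [Finsupp.support_cons_zero, card_map]
        have := P.card_support_eval_one_le
        omega
      · rwa [coeff_cons_shiftOne, Polynomial.coeff_comp_X_add_one_zero]

end MvPolynomial

theorem sparse_shift_by_one_has_low_support_coeff_general
    {F : Type*} [Field F] {n ℓ : ℕ}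
    (V : MvPolynomial (Fin n) F) (hV : V ≠ 0)
    (hsparse : V.support.card ≤ 2 ^ ℓ - 1) :
    ∃ a : Fin n →₀ ℕ, a.support.card < ℓ ∧
      (MvPolynomial.aeval (fun i => MvPolynomial.X i + 1) V :
        MvPolynomial (Fin n) F).coeff a ≠ 0 := by
  obtain ⟨a, ha, hne⟩ := exists_two_pow_card_support_le_and_coeff_shiftOne_ne_zero V hV
  refine ⟨a, (Nat.pow_lt_pow_iff_right one_lt_two).mp ?_, hne⟩
  have := Nat.one_le_two_pow (n := ℓ)
  omega

/-- Claim 5.4 of the paper, concentration in sparse polynomials: if `V` is a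
nonzero polynomial with sparsity at most `2^ℓ - 1`, then `V(x + 1)` has a nonzero coefficient
on some monomial of support `< ℓ`. -/
theorem sparse_shift_by_one_has_low_support_coeff
    {F : Type*} [Field F] {n ℓ : ℕ} (hl : 1 ≤ ℓ)
    (V : MvPolynomial (Fin n) F) (hV : V ≠ 0)
    (hsparse : V.support.card ≤ 2 ^ ℓ - 1) :
    ∃ a : Fin n →₀ ℕ, a.support.card < ℓ ∧
      (MvPolynomial.aeval (fun i => MvPolynomial.X i + 1) V :
        MvPolynomial (Fin n) F).coeff a ≠ 0 :=
  sparse_shift_by_one_has_low_support_coeff_general V hV hsparse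
end
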